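/- arXiv:2508.07581 — 2 statements merged into one kernel-verified Lean document; each statement's English description precedes it below -/
import Mathlib

section
/- Let μ be a finite Borel measure on ℝ^D with compact support and let f : ℝ^D → ℝ be C¹. Then the statistical response exists: the map ε ↦ ∫ f(F^τ_ε(x)) dμ(x) is differentiable at ε = 0, and its derivative equals ∫ r_τ(f)(x) dμ(x) = Σ_{i=0}^{τ−1} ∫ ⟨∇(f ∘ F_{τ−1} ∘ ⋯ ∘ F_{i+1})(F^{i+1}(x)), χ_i(F^i(x))⟩ dμ(x). -/
/-!
For fixed `x`, the orbit point `F^t_ε(x)` is differentiable in `ε` at `0`; its derivative `v_t`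
obeys the linearized recursion `v_{t+1} = DF_t(F^t x) v_t + χ_t(F^t x)`, and unwinding it with the
chain rule turns the pointwise derivative of `f(F^τ_ε x)` into the stated sum. To differentiate
under the integral it suffices to have `‖f(F^τ_ε x) - f(F^τ x)‖ ≤ C |ε|` uniformly on the compact
set `K` carrying `μ`. This holds by induction on the number of steps: for `|ε| ≤ 1` the perturbed orbits of `K`
stay in a compact set, on which the `C¹` maps `F_t` and `f` are Lipschitz and `χ_t` is bounded.
-/

open scoped RealInnerProductSpace
open MeasureTheory

/-- The perturbed composition `F^t_ε`: `F^0_ε = id`, `F^{t+1}_ε = (F_t + ε χ_t) ∘ F^t_ε`. -/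
noncomputable def perturbedIter (D : ℕ)
    (F χ : ℕ → EuclideanSpace ℝ (Fin D) → EuclideanSpace ℝ (Fin D)) (ε : ℝ) :
    ℕ → EuclideanSpace ℝ (Fin D) → EuclideanSpace ℝ (Fin D)
  | 0 => id
  | (t + 1) => (fun x => F t x + ε • χ t x) ∘ perturbedIter D F χ ε t

/-- The composition `F_{a+k-1} ∘ ⋯ ∘ F_a` (the identity when `k = 0`). -/
noncomputable def tailComp (D : ℕ)
    (F : ℕ → EuclideanSpace ℝ (Fin D) → EuclideanSpace ℝ (Fin D)) (a : ℕ) :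
    ℕ → EuclideanSpace ℝ (Fin D) → EuclideanSpace ℝ (Fin D)
  | 0 => id
  | (k + 1) => F (a + k) ∘ tailComp D F a k

open Filter Metric Topology

section ParametricIntegral

variable {α E : Type*} [MeasurableSpace α] {μ : Measure α}
  [NormedAddCommGroup E] [NormedSpace ℝ E] [CompleteSpace E]

/-- Unlike `hasDerivAt_integral_of_dominated_loc_of_lip`, only a Lipschitz bound at the base
point `x₀` is required. -/
theorem hasDerivAt_integral_of_dominated_loc_of_lip' {F : ℝ → α → E} {F' : α → E} {x₀ : ℝ}
    {s : Set ℝ} {bound : α → ℝ} (hs : s ∈ 𝓝 x₀)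
    (hF_meas : ∀ x ∈ s, AEStronglyMeasurable (F x) μ) (hF_int : Integrable (F x₀) μ)
    (hF'_meas : AEStronglyMeasurable F' μ)
    (h_lipsch : ∀ᵐ a ∂μ, ∀ x ∈ s, ‖F x a - F x₀ a‖ ≤ bound a * ‖x - x₀‖)
    (bound_integrable : Integrable bound μ)
    (h_diff : ∀ᵐ a ∂μ, HasDerivAt (F · a) (F' a) x₀) :
    HasDerivAt (fun x ↦ ∫ a, F x a ∂μ) (∫ a, F' a ∂μ) x₀ := by
  set L : E →L[ℝ] ℝ →L[ℝ] E := ContinuousLinearMap.smulRightL ℝ ℝ E 1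
  have hLF'_meas : AEStronglyMeasurable (L ∘ F') μ :=
    L.continuous.comp_aestronglyMeasurable hF'_meas
  obtain ⟨hLF'_int, key⟩ := hasFDerivAt_integral_of_dominated_loc_of_lip' hs hF_meas hF_int
    hLF'_meas h_lipsch bound_integrable (h_diff.mono fun a ha ↦ ha.hasFDerivAt)
  have hF'_int : Integrable F' μ := by
    rw [← integrable_norm_iff hLF'_meas] at hLF'_int
    simpa [L, Function.comp_def, integrable_norm_iff hF'_meas] using hLF'_int
  rw [hasDerivAt_iff_hasFDerivAt]
  simpa only [Function.comp_def, ContinuousLinearMap.integral_comp_comm _ hF'_int] using! key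

end ParametricIntegral

theorem Continuous.integrable_of_ae_mem_isCompact {X E : Type*} [TopologicalSpace X]
    [T2Space X] [MeasurableSpace X] [OpensMeasurableSpace X] [NormedAddCommGroup E] {μ : Measure X}
    [IsFiniteMeasure μ] {g : X → E} (hg : Continuous g) {K : Set X} (hK : IsCompact K)
    (hμK : ∀ᵐ x ∂μ, x ∈ K) : Integrable g μ := by
  rw [← Measure.restrict_eq_self_of_ae_mem hμK]
  exact hg.continuousOn.integrableOn_compact hK

theorem LocallyLipschitz.exists_norm_sub_le_of_continuous_uncurry {X Y Z : Type*}
    [TopologicalSpace X] [NormedAddCommGroup Y] [NormedAddCommGroup Z] {g : Y → Z}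
    (hg : LocallyLipschitz g) {φ : ℝ → X → Y} (hφ : Continuous (Function.uncurry φ))
    {K : Set X} (hK : IsCompact K) {C : ℝ}
    (hC : ∀ x ∈ K, ∀ ε ∈ closedBall (0 : ℝ) 1, ‖φ ε x - φ 0 x‖ ≤ C * ‖ε‖) :
    ∃ C' : ℝ, ∀ x ∈ K, ∀ ε ∈ closedBall (0 : ℝ) 1, ‖g (φ ε x) - g (φ 0 x)‖ ≤ C' * ‖ε‖ := by
  have hS : IsCompact (Function.uncurry φ '' closedBall (0 : ℝ) 1 ×ˢ K) :=
    ((isCompact_closedBall 0 1).prod hK).image hφ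
  obtain ⟨L, hL⟩ := hg.locallyLipschitzOn.exists_lipschitzOnWith_of_compact hS
  refine ⟨L * C, fun x hx ε hε ↦ ?_⟩
  have hmem : ∀ δ ∈ closedBall (0 : ℝ) 1, φ δ x ∈ Function.uncurry φ '' closedBall 0 1 ×ˢ K :=
    fun δ hδ ↦ ⟨(δ, x), ⟨hδ, hx⟩, rfl⟩
  calc ‖g (φ ε x) - g (φ 0 x)‖ ≤ L * ‖φ ε x - φ 0 x‖ :=
        hL.norm_sub_le (hmem ε hε) (hmem 0 (mem_closedBall_self zero_le_one))
    _ ≤ L * (C * ‖ε‖) := by gcongr; exact hC x hx ε hε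
    _ = L * C * ‖ε‖ := by ring

theorem hasDerivAt_id_smul_of_continuousAt {G : Type*} [NormedAddCommGroup G] [NormedSpace ℝ G]
    {c : ℝ → G} (hc : ContinuousAt c 0) :
    HasDerivAt (fun ε : ℝ ↦ ε • c ε) (c 0) 0 := by
  rw [hasDerivAt_iff_tendsto_slope]
  refine (hc.tendsto.mono_left nhdsWithin_le_nhds).congr' ?_
  filter_upwards [self_mem_nhdsWithin] with ε hε
  simp [slope_def_module, smul_smul, inv_mul_cancel₀ (show ε ≠ 0 from hε)]

section PerturbedIter

variable {D : ℕ} (F χ : ℕ → EuclideanSpace ℝ (Fin D) → EuclideanSpace ℝ (Fin D))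

local notation "E" => EuclideanSpace ℝ (Fin D)

theorem perturbedIter_succ_apply (ε : ℝ) (t : ℕ) (x : E) :
    perturbedIter D F χ ε (t + 1) x
      = F t (perturbedIter D F χ ε t x) + ε • χ t (perturbedIter D F χ ε t x) := rfl

theorem perturbedIter_zero_succ_apply (t : ℕ) (x : E) :
    perturbedIter D F χ 0 (t + 1) x = F t (perturbedIter D F χ 0 t x) := by
  simp [perturbedIter_succ_apply]

theorem tailComp_sub_of_lt {i t : ℕ} (hi : i < t) :
    tailComp D F (i + 1) (t - i) = F t ∘ tailComp D F (i + 1) (t - 1 - i) := by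
  obtain ⟨k, rfl⟩ := Nat.exists_eq_add_of_lt hi
  rw [show i + k + 1 - i = k + 1 by omega, show i + k + 1 - 1 - i = k by omega, tailComp,
    show i + 1 + k = i + k + 1 by omega]

theorem contDiff_tailComp {n : WithTop ℕ∞} {a k : ℕ} (hF : ∀ j < a + k, ContDiff ℝ n (F j)) :
    ContDiff ℝ n (tailComp D F a k) := by
  induction k with
  | zero => exact contDiff_id
  | succ k ih => exact (hF (a + k) (by omega)).comp (ih fun j hj ↦ hF j (by omega))

theorem continuous_uncurry_perturbedIter {t : ℕ} (hF : ∀ s < t, Continuous (F s))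
    (hχ : ∀ s < t, Continuous (χ s)) :
    Continuous (Function.uncurry fun ε ↦ perturbedIter D F χ ε t) := by
  induction t with
  | zero => exact continuous_snd
  | succ t ih =>
    have hprev := ih (fun s hs ↦ hF s (by omega)) (fun s hs ↦ hχ s (by omega))
    exact ((hF t t.lt_succ_self).comp hprev).add
      (continuous_fst.smul ((hχ t t.lt_succ_self).comp hprev))

theorem continuous_perturbedIter {t : ℕ} (hF : ∀ s < t, Continuous (F s))
    (hχ : ∀ s < t, Continuous (χ s)) (ε : ℝ) : Continuous (perturbedIter D F χ ε t) :=
  (continuous_uncurry_perturbedIter F χ hF hχ).comp (Continuous.prodMk_right ε)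

noncomputable def orbitVariation (x : E) : ℕ → E
  | 0 => 0
  | t + 1 => fderiv ℝ (F t) (perturbedIter D F χ 0 t x) (orbitVariation x t)
      + χ t (perturbedIter D F χ 0 t x)

theorem hasDerivAt_perturbedIter {t : ℕ} (hF : ∀ s < t, Differentiable ℝ (F s))
    (hχ : ∀ s < t, Continuous (χ s)) (x : E) :
    HasDerivAt (fun ε ↦ perturbedIter D F χ ε t x) (orbitVariation F χ x t) 0 := by
  induction t with
  | zero => exact hasDerivAt_const 0 x
  | succ t ih =>
    have hprev := ih (fun s hs ↦ hF s (by omega)) (fun s hs ↦ hχ s (by omega))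
    exact ((hF t t.lt_succ_self _).hasFDerivAt.comp_hasDerivAt 0 hprev).add
      (hasDerivAt_id_smul_of_continuousAt
        ((hχ t t.lt_succ_self).continuousAt.comp hprev.continuousAt))

theorem fderiv_apply_orbitVariation {t : ℕ} (hF : ∀ s < t, Differentiable ℝ (F s)) (x : E)
    {G : Type*} [NormedAddCommGroup G] [NormedSpace ℝ G] {g : E → G} (hg : Differentiable ℝ g) :
    fderiv ℝ g (perturbedIter D F χ 0 t x) (orbitVariation F χ x t)
      = ∑ i ∈ Finset.range t, fderiv ℝ (g ∘ tailComp D F (i + 1) (t - 1 - i))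
          (perturbedIter D F χ 0 (i + 1) x) (χ i (perturbedIter D F χ 0 i x)) := by
  induction t generalizing g with
  | zero => simp [orbitVariation]
  | succ t ih =>
    have hFt : Differentiable ℝ (F t) := hF t t.lt_succ_self
    have hprev := ih (fun s hs ↦ hF s (by omega)) (hg.comp hFt)
    rw [Finset.sum_range_succ, perturbedIter_zero_succ_apply, orbitVariation, map_add,
      ← ContinuousLinearMap.comp_apply, ← fderiv_comp _ (hg _) (hFt _), hprev]
    congr 1
    · refine Finset.sum_congr rfl fun i hi ↦ ?_
      rw [Nat.add_sub_cancel, tailComp_sub_of_lt F (Finset.mem_range.1 hi), Function.comp_assoc]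
    · simp [tailComp]

theorem exists_norm_perturbedIter_sub_le {t : ℕ} (hF : ∀ s < t, ContDiff ℝ 1 (F s))
    (hχ : ∀ s < t, Continuous (χ s)) {K : Set E} (hK : IsCompact K) :
    ∃ C : ℝ, ∀ x ∈ K, ∀ ε ∈ closedBall (0 : ℝ) 1,
      ‖perturbedIter D F χ ε t x - perturbedIter D F χ 0 t x‖ ≤ C * ‖ε‖ := by
  induction t with
  | zero => exact ⟨0, fun x _ ε _ ↦ by simp [perturbedIter]⟩
  | succ t ih =>
    have hFt := hF t t.lt_succ_self
    have hprev := continuous_uncurry_perturbedIter F χ (t := t)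
      (fun s hs ↦ (hF s (by omega)).continuous) (fun s hs ↦ hχ s (by omega))
    obtain ⟨C, hC⟩ := ih (fun s hs ↦ hF s (by omega)) (fun s hs ↦ hχ s (by omega))
    obtain ⟨CF, hCF⟩ :=
      hFt.locallyLipschitz.exists_norm_sub_le_of_continuous_uncurry hprev hK hC
    obtain ⟨M, hM⟩ := ((isCompact_closedBall (0 : ℝ) 1).prod hK).exists_bound_of_continuousOn
      ((hχ t t.lt_succ_self).comp hprev).continuousOn
    refine ⟨CF + M, fun x hx ε hε ↦ ?_⟩
    rw [perturbedIter_succ_apply, perturbedIter_zero_succ_apply, add_sub_right_comm]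
    calc _ ≤ ‖F t (perturbedIter D F χ ε t x) - F t (perturbedIter D F χ 0 t x)‖
          + ‖ε‖ * ‖χ t (perturbedIter D F χ ε t x)‖ := by
            rw [← norm_smul]; exact norm_add_le _ _
      _ ≤ CF * ‖ε‖ + ‖ε‖ * M := by
          gcongr
          · exact hCF x hx ε hε
          · exact hM (ε, x) ⟨hε, hx⟩
      _ = (CF + M) * ‖ε‖ := by ring

theorem continuous_fderiv_tailComp_apply {τ : ℕ} (hF : ∀ t < τ, ContDiff ℝ 1 (F t))
    (hχ : ∀ t < τ, Continuous (χ t)) {G : Type*} [NormedAddCommGroup G] [NormedSpace ℝ G]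
    {g : E → G} (hg : ContDiff ℝ 1 g) {i : ℕ} (hi : i < τ) :
    Continuous fun x ↦ fderiv ℝ (g ∘ tailComp D F (i + 1) (τ - 1 - i))
      (perturbedIter D F χ 0 (i + 1) x) (χ i (perturbedIter D F χ 0 i x)) := by
  have hcont : ∀ j ≤ τ, Continuous (perturbedIter D F χ 0 j) := fun j hj ↦
    continuous_perturbedIter F χ (fun s hs ↦ (hF s (by omega)).continuous)
      (fun s hs ↦ hχ s (by omega)) 0
  have hgT : ContDiff ℝ 1 (g ∘ tailComp D F (i + 1) (τ - 1 - i)) :=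
    hg.comp (contDiff_tailComp F fun j hj ↦ hF j (by omega))
  exact (hgT.continuous_fderiv_apply one_ne_zero).comp
    ((hcont (i + 1) hi).prodMk ((hχ i hi).comp (hcont i hi.le)))

end PerturbedIter

/-- For a finite compactly supported Borel measure `μ` and a C¹ function `f`,
the statistical response exists: `ε ↦ ∫ f(F^τ_ε(x)) dμ(x)` is differentiable at `ε = 0` with
derivative `∫ r_τ(f) dμ = Σ_{i=0}^{τ-1} ∫ ⟨∇(f ∘ F_{τ-1} ∘ ⋯ ∘ F_{i+1})(F^{i+1}(x)),
χ_i(F^i(x))⟩ dμ(x)`. -/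
theorem statement3 (D τ : ℕ)
    (F χ : ℕ → EuclideanSpace ℝ (Fin D) → EuclideanSpace ℝ (Fin D))
    (hF : ∀ t < τ, ContDiff ℝ 1 (F t)) (hχ : ∀ t < τ, Continuous (χ t))
    (μ : Measure (EuclideanSpace ℝ (Fin D))) [IsFiniteMeasure μ]
    (hμ : ∃ K : Set (EuclideanSpace ℝ (Fin D)), IsCompact K ∧ μ Kᶜ = 0)
    (f : EuclideanSpace ℝ (Fin D) → ℝ) (hf : ContDiff ℝ 1 f) :
    HasDerivAt (fun ε : ℝ => ∫ x, f (perturbedIter D F χ ε τ x) ∂μ)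
      (∫ x, (∑ i ∈ Finset.range τ,
        ⟪gradient (f ∘ tailComp D F (i + 1) (τ - 1 - i)) (perturbedIter D F χ 0 (i + 1) x),
          χ i (perturbedIter D F χ 0 i x)⟫) ∂μ)
      0 ∧
    (∫ x, (∑ i ∈ Finset.range τ,
        ⟪gradient (f ∘ tailComp D F (i + 1) (τ - 1 - i)) (perturbedIter D F χ 0 (i + 1) x),
          χ i (perturbedIter D F χ 0 i x)⟫) ∂μ)
      = ∑ i ∈ Finset.range τ, ∫ x,
          ⟪gradient (f ∘ tailComp D F (i + 1) (τ - 1 - i)) (perturbedIter D F χ 0 (i + 1) x),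
            χ i (perturbedIter D F χ 0 i x)⟫ ∂μ := by
  obtain ⟨K, hK, hμK⟩ := hμ
  have hK_ae : ∀ᵐ x ∂μ, x ∈ K := ae_iff.2 hμK
  have hFdiff : ∀ t < τ, Differentiable ℝ (F t) := fun t ht ↦ (hF t ht).differentiable one_ne_zero
  have hFcont : ∀ t < τ, Continuous (F t) := fun t ht ↦ (hF t ht).continuous
  have hfτ : ∀ ε, Continuous fun x ↦ f (perturbedIter D F χ ε τ x) := fun ε ↦
    hf.continuous.comp (continuous_perturbedIter F χ hFcont hχ ε)
  have hterm := fun i (hi : i ∈ Finset.range τ) ↦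
    continuous_fderiv_tailComp_apply F χ hF hχ hf (Finset.mem_range.1 hi)
  obtain ⟨C₀, hC₀⟩ := exists_norm_perturbedIter_sub_le F χ hF hχ hK
  obtain ⟨C, hC⟩ := hf.locallyLipschitz.exists_norm_sub_le_of_continuous_uncurry
    (continuous_uncurry_perturbedIter F χ hFcont hχ) hK hC₀
  have hpointwise : ∀ x, HasDerivAt (fun ε ↦ f (perturbedIter D F χ ε τ x))
      (fderiv ℝ f (perturbedIter D F χ 0 τ x) (orbitVariation F χ x τ)) 0 := fun x ↦
    (hf.differentiable one_ne_zero _).hasFDerivAt.comp_hasDerivAt 0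
      (hasDerivAt_perturbedIter F χ hFdiff hχ x)
  simp only [inner_gradient_left, fderiv_apply_orbitVariation F χ hFdiff _
    (hf.differentiable one_ne_zero)] at hpointwise ⊢
  refine ⟨hasDerivAt_integral_of_dominated_loc_of_lip' (closedBall_mem_nhds 0 one_pos)
    (fun ε _ ↦ (hfτ ε).aestronglyMeasurable) ((hfτ 0).integrable_of_ae_mem_isCompact hK hK_ae)
    (continuous_finsetSum _ hterm).aestronglyMeasurable
    (hK_ae.mono fun x hx ε hε ↦ by rw [sub_zero]; exact hC x hx ε hε) (integrable_const C)
    (ae_of_all _ hpointwise), integral_finsetSum _ fun i hi ↦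
      (hterm i hi).integrable_of_ae_mem_isCompact hK hK_ae⟩
end

section
/- (Score component recursion, equation (3).) Let F : ℝ^D → ℝ^D be a C² diffeomorphism, ρ : ℝ^D → (0, ∞) a positive C¹ density, and ρ̃(y) := ρ(F⁻¹(y)) / |det DF(F⁻¹(y))| the pushforward density, with scores s := ∇ log ρ, s̃ := ∇ log ρ̃ and correction vector w(x)_j := tr(DF(x)⁻¹ ∂_j DF(x)). Fix x ∈ ℝ^D, and suppose E, E′ are real D × d matrices and R is an invertible real d × d matrix such that DF(x) E = E′ R. Then the score components along these frames satisfy E′ᵀ s̃(F(x)) = R^{-T} Eᵀ ( s(x) − w(x) ). -/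
open Matrix

/-- The Jacobian matrix of `F : ℝ^D → ℝ^D` at `x`: entry `(i, j)` is `∂_j F_i (x)`. -/
noncomputable def jacMatrix (D : ℕ)
    (F : EuclideanSpace ℝ (Fin D) → EuclideanSpace ℝ (Fin D))
    (x : EuclideanSpace ℝ (Fin D)) : Matrix (Fin D) (Fin D) ℝ :=
  Matrix.of fun i j => fderiv ℝ (fun y => F y i) x (EuclideanSpace.single j 1)

/-- The entrywise partial derivative, in the `j`-th coordinate direction, of a matrix-valued
function on `ℝ^D`. -/
noncomputable def pderivMatrix (D : ℕ)
    (A : EuclideanSpace ℝ (Fin D) → Matrix (Fin D) (Fin D) ℝ) (j : Fin D)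
    (x : EuclideanSpace ℝ (Fin D)) : Matrix (Fin D) (Fin D) ℝ :=
  Matrix.of fun a b => fderiv ℝ (fun y => A y a b) x (EuclideanSpace.single j 1)

/-!
Because `ρ̃ ∘ F = ρ / |det DF|`, the function `log ρ̃ ∘ F` equals `log ρ - log |det DF|`. The chain
rule turns the gradient of the left side into `DF(x)ᵀ s̃(F x)`, and Jacobi's formula
`∂_j det A = tr (adj A ∂_j A)` turns that of `log |det DF|` into `w`; so
`DF(x)ᵀ s̃(F x) = s(x) - w(x)`. Finally `DF(x) E = E' R` gives `E'ᵀ = R⁻ᵀ Eᵀ DF(x)ᵀ`.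
-/

namespace Matrix

theorem sum_det_updateRow_eq_trace_adjugate_mul {α n : Type*} [CommRing α] [Fintype n]
    [DecidableEq n] (A H : Matrix n n α) :
    ∑ i, (A.updateRow i (H i)).det = trace (A.adjugate * H) := by
  simp only [← cramer_transpose_apply, cramer_eq_adjugate_mulVec, ← adjugate_transpose, trace, diag,
    mul_apply, mulVec, dotProduct, transpose_apply]
  exact Finset.sum_comm

theorem transpose_mulVec_eq_of_mul_eq_mul {α m k : Type*} [CommRing α] [Fintype m] [Fintype k]
    [DecidableEq k] {J : Matrix m m α} {E E' : Matrix m k α} {R : Matrix k k α}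
    (hR : IsUnit R.det) (h : J * E = E' * R) (v : m → α) :
    E'ᵀ *ᵥ v = (R⁻¹)ᵀ *ᵥ (Eᵀ *ᵥ (Jᵀ *ᵥ v)) := by
  have hE' : E' = J * E * R⁻¹ := by rw [h, Matrix.mul_assoc, mul_nonsing_inv R hR, Matrix.mul_one]
  rw [mulVec_mulVec, mulVec_mulVec, hE', ← transpose_mul, ← transpose_mul, Matrix.mul_assoc]

section Calculus

variable {𝕜 n G : Type*} [NontriviallyNormedField 𝕜] [Fintype n] [DecidableEq n]
  [NormedAddCommGroup G] [NormedSpace 𝕜 G]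

variable (𝕜 n) in
noncomputable def detContinuousMultilinearMap :
    ContinuousMultilinearMap 𝕜 (fun _ : n => n → 𝕜) 𝕜 where
  toMultilinearMap := (detRowAlternating : (n → 𝕜) [⋀^n]→ₗ[𝕜] 𝕜).toMultilinearMap
  cont := continuous_id.matrix_det

theorem hasFDerivAt_det {A : G → Matrix n n 𝕜} {A' : n → n → G →L[𝕜] 𝕜} {x : G}
    (hA : ∀ a b, HasFDerivAt (fun y => A y a b) (A' a b) x) :
    HasFDerivAt (fun y => (A y).det)
      ((detContinuousMultilinearMap 𝕜 n).linearDeriv (of.symm (A x)) ∘L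
        .pi fun a => .pi fun b => A' a b) x :=
  (detContinuousMultilinearMap 𝕜 n).hasFDerivAt (of.symm (A x)) |>.comp x <|
    hasFDerivAt_pi.2 fun a => hasFDerivAt_pi.2 fun b => hA a b

theorem differentiableAt_det {A : G → Matrix n n 𝕜} {x : G}
    (hA : ∀ a b, DifferentiableAt 𝕜 (fun y => A y a b) x) :
    DifferentiableAt 𝕜 (fun y => (A y).det) x :=
  (hasFDerivAt_det fun a b => (hA a b).hasFDerivAt).differentiableAt

theorem fderiv_det_apply {A : G → Matrix n n 𝕜} {x : G}
    (hA : ∀ a b, DifferentiableAt 𝕜 (fun y => A y a b) x) (v : G) :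
    fderiv 𝕜 (fun y => (A y).det) x v =
      trace ((A x).adjugate * of fun a b => fderiv 𝕜 (fun y => A y a b) x v) := by
  rw [(hasFDerivAt_det fun a b => (hA a b).hasFDerivAt).fderiv, ContinuousLinearMap.comp_apply,
    ContinuousMultilinearMap.linearDeriv_apply, ← sum_det_updateRow_eq_trace_adjugate_mul]
  rfl

theorem fderiv_log_det_apply [NormedSpace ℝ G] {A : G → Matrix n n ℝ} {x : G}
    (hA : ∀ a b, DifferentiableAt ℝ (fun y => A y a b) x) (hdet : (A x).det ≠ 0) (v : G) :
    fderiv ℝ (fun y => Real.log (A y).det) x v =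
      trace ((A x)⁻¹ * of fun a b => fderiv ℝ (fun y => A y a b) x v) := by
  rw [fderiv.log (differentiableAt_det hA) hdet, _root_.smul_apply, fderiv_det_apply hA, inv_def,
    Ring.inverse_eq_inv', smul_mul_assoc, trace_smul, smul_eq_mul]

end Calculus

end Matrix

theorem EuclideanSpace.gradient_apply {ι : Type*} [Fintype ι] [DecidableEq ι]
    (f : EuclideanSpace ℝ ι → ℝ) (x : EuclideanSpace ℝ ι) (i : ι) :
    gradient f x i = fderiv ℝ f x (EuclideanSpace.single i 1) := by
  rw [← inner_gradient_left, EuclideanSpace.inner_single_right, one_mul, conj_trivial]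

section Jacobian

variable {D : ℕ} {F G : EuclideanSpace ℝ (Fin D) → EuclideanSpace ℝ (Fin D)}
  {x : EuclideanSpace ℝ (Fin D)}

theorem jacMatrix_apply (hF : DifferentiableAt ℝ F x) (i j : Fin D) :
    jacMatrix D F x i j = fderiv ℝ F x (EuclideanSpace.single j 1) i :=
  DFunLike.congr_fun ((PiLp.hasFDerivAt_apply 2 (F x) i).comp x hF.hasFDerivAt).fderiv _

theorem jacMatrix_eq_toMatrix (hF : DifferentiableAt ℝ F x) :
    jacMatrix D F x = LinearMap.toMatrix (EuclideanSpace.basisFun (Fin D) ℝ).toBasis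
      (EuclideanSpace.basisFun (Fin D) ℝ).toBasis (fderiv ℝ F x) := by
  ext i j
  rw [jacMatrix_apply hF, LinearMap.toMatrix_apply]
  simp

theorem jacMatrix_comp (hG : DifferentiableAt ℝ G (F x)) (hF : DifferentiableAt ℝ F x) :
    jacMatrix D (G ∘ F) x = jacMatrix D G (F x) * jacMatrix D F x := by
  rw [jacMatrix_eq_toMatrix (hG.comp x hF), jacMatrix_eq_toMatrix hG, jacMatrix_eq_toMatrix hF,
    fderiv_comp x hG hF, ContinuousLinearMap.toLinearMap_comp]
  exact LinearMap.toMatrix_comp _ _ _ _ _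

theorem jacMatrix_id : jacMatrix D id x = 1 := by
  rw [jacMatrix_eq_toMatrix differentiableAt_id, fderiv_id, ContinuousLinearMap.coe_id,
    LinearMap.toMatrix_id]

theorem isUnit_det_jacMatrix_of_leftInverse (hF : Differentiable ℝ F) (hG : Differentiable ℝ G)
    (hGF : Function.LeftInverse G F) (x : EuclideanSpace ℝ (Fin D)) :
    IsUnit (jacMatrix D F x).det :=
  isUnit_det_of_left_inverse <| by
    rw [← jacMatrix_comp (hG (F x)) (hF x), hGF.comp_eq_id, jacMatrix_id]

theorem differentiable_jacMatrix_apply (hF : ContDiff ℝ 2 F) (i j : Fin D) :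
    Differentiable ℝ fun y => jacMatrix D F y i j :=
  (((contDiff_piLp 2).1 hF i).fderiv_right (by norm_num)).clm_apply contDiff_const
    |>.differentiable one_ne_zero

theorem gradient_comp_eq_transpose_mulVec {g : EuclideanSpace ℝ (Fin D) → ℝ}
    (hg : DifferentiableAt ℝ g (F x)) (hF : DifferentiableAt ℝ F x) :
    (fun j => gradient (g ∘ F) x j) = (jacMatrix D F x)ᵀ *ᵥ fun i => gradient g (F x) i := by
  ext j
  rw [EuclideanSpace.gradient_apply, fderiv_comp x hg hF, ContinuousLinearMap.comp_apply,
    ← inner_gradient_left, PiLp.inner_apply]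
  simp [mulVec, dotProduct, jacMatrix_apply hF, mul_comm]

end Jacobian

theorem statement8_general (D d : ℕ)
    (F Finv : EuclideanSpace ℝ (Fin D) → EuclideanSpace ℝ (Fin D))
    (hF : ContDiff ℝ 2 F) (hFinv : ContDiff ℝ 2 Finv)
    (hleft : ∀ x, Finv (F x) = x)
    (ρ : EuclideanSpace ℝ (Fin D) → ℝ) (hρpos : ∀ x, 0 < ρ x) (hρ : ContDiff ℝ 1 ρ)
    (ρTilde : EuclideanSpace ℝ (Fin D) → ℝ)
    (hρTilde : ∀ y, ρTilde y = ρ (Finv y) / |(jacMatrix D F (Finv y)).det|)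
    (x : EuclideanSpace ℝ (Fin D))
    (E E' : Matrix (Fin D) (Fin d) ℝ) (R : Matrix (Fin d) (Fin d) ℝ)
    (hR : IsUnit R.det)
    (hQR : jacMatrix D F x * E = E' * R) :
    Matrix.mulVec E'ᵀ (fun i => gradient (fun y => Real.log (ρTilde y)) (F x) i)
      = Matrix.mulVec (R⁻¹)ᵀ (Matrix.mulVec Eᵀ
          (fun i => gradient (fun y => Real.log (ρ y)) x i
            - Matrix.trace ((jacMatrix D F x)⁻¹ * pderivMatrix D (jacMatrix D F) i x))) := by
  have hFd : Differentiable ℝ F := hF.differentiable (by norm_num)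
  have hFinvd : Differentiable ℝ Finv := hFinv.differentiable (by norm_num)
  have hdet z : (jacMatrix D F z).det ≠ 0 :=
    (isUnit_det_jacMatrix_of_leftInverse hFd hFinvd hleft z).ne_zero
  have hJ z a b := differentiable_jacMatrix_apply hF a b z
  have hlogρ : Differentiable ℝ fun z => Real.log (ρ z) :=
    fun z => (hρ.differentiable one_ne_zero z).log (hρpos z).ne'
  have hlogdet : Differentiable ℝ fun z => Real.log (jacMatrix D F z).det :=
    fun z => (differentiableAt_det (hJ z)).log (hdet z)
  have hlog : (fun y => Real.log (ρTilde y))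
      = (fun z => Real.log (ρ z) - Real.log (jacMatrix D F z).det) ∘ Finv := by
    funext y
    rw [hρTilde, Real.log_div (hρpos _).ne' (abs_ne_zero.2 (hdet _)), Real.log_abs]
    rfl
  have hlogρTilde : DifferentiableAt ℝ (fun y => Real.log (ρTilde y)) (F x) := by
    rw [hlog]
    exact ((hlogρ _).sub (hlogdet _)).comp _ (hFinvd _)
  have hscore : (jacMatrix D F x)ᵀ *ᵥ (fun i => gradient (fun y => Real.log (ρTilde y)) (F x) i)
      = fun j => gradient (fun y => Real.log (ρ y)) x j
          - trace ((jacMatrix D F x)⁻¹ * pderivMatrix D (jacMatrix D F) j x) := by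
    rw [← gradient_comp_eq_transpose_mulVec hlogρTilde (hFd x), hlog, Function.comp_assoc,
      Function.LeftInverse.comp_eq_id hleft, Function.comp_id]
    ext j
    rw [EuclideanSpace.gradient_apply, EuclideanSpace.gradient_apply,
      fderiv_fun_sub (hlogρ x) (hlogdet x), _root_.sub_apply,
      fderiv_log_det_apply (hJ x) (hdet x)]
    rfl
  rw [transpose_mulVec_eq_of_mul_eq_mul hR hQR, hscore]

/-- **Score component recursion.** With `F` a C² diffeomorphism of `ℝ^D`,
`ρ` a positive C¹ density, `ρ̃` the pushforward density with scores `s = ∇ log ρ`,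
`s̃ = ∇ log ρ̃` and correction vector `w(x)_j = tr(DF(x)⁻¹ ∂_j DF(x))`: if `E, E'` are
`D × d` matrices and `R` an invertible `d × d` matrix with `DF(x) E = E' R`, then
`E'ᵀ s̃(F(x)) = R⁻ᵀ Eᵀ (s(x) − w(x))`. -/
theorem statement8 (D d : ℕ) (hd : 1 ≤ d) (hdD : d ≤ D)
    (F Finv : EuclideanSpace ℝ (Fin D) → EuclideanSpace ℝ (Fin D))
    (hF : ContDiff ℝ 2 F) (hFinv : ContDiff ℝ 2 Finv)
    (hleft : ∀ x, Finv (F x) = x) (hright : ∀ y, F (Finv y) = y)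
    (ρ : EuclideanSpace ℝ (Fin D) → ℝ) (hρpos : ∀ x, 0 < ρ x) (hρ : ContDiff ℝ 1 ρ)
    (ρTilde : EuclideanSpace ℝ (Fin D) → ℝ)
    (hρTilde : ∀ y, ρTilde y = ρ (Finv y) / |(jacMatrix D F (Finv y)).det|)
    (x : EuclideanSpace ℝ (Fin D))
    (E E' : Matrix (Fin D) (Fin d) ℝ) (R : Matrix (Fin d) (Fin d) ℝ)
    (hR : IsUnit R.det)
    (hQR : jacMatrix D F x * E = E' * R) :
    Matrix.mulVec E'ᵀ (fun i => gradient (fun y => Real.log (ρTilde y)) (F x) i)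
      = Matrix.mulVec (R⁻¹)ᵀ (Matrix.mulVec Eᵀ
          (fun i => gradient (fun y => Real.log (ρ y)) x i
            - Matrix.trace ((jacMatrix D F x)⁻¹ * pderivMatrix D (jacMatrix D F) i x))) :=
  statement8_general D d F Finv hF hFinv hleft ρ hρpos hρ ρTilde hρTilde x E E' R hR hQR
end
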